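/- arXiv:math/0702199 — 2 statements merged into one kernel-verified Lean document; each statement's English description precedes it below -/
import Mathlib

section
/- Let X be a Banach space that embeds isomorphically into a Banach space Z with a 1-unconditional Schauder basis. Then there is a constant K such that every normalized weakly null sequence in X has a subsequence that is K-unconditional. -/
open Filter

/-- `ε` is a sequence of signs. -/
def IsSignSeq (ε : ℕ → ℝ) : Prop := ∀ n, ε n = 1 ∨ ε n = -1

/-- A sequence `x` is `K`-unconditional. -/
def UncondWith {X : Type*} [NormedAddCommGroup X] [NormedSpace ℝ X]
    (K : ℝ) (x : ℕ → X) : Prop :=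
  ∀ (a ε : ℕ → ℝ), IsSignSeq ε → ∀ s : Finset ℕ,
    ‖∑ n ∈ s, (ε n * a n) • x n‖ ≤ K * ‖∑ n ∈ s, a n • x n‖

/-- A sequence is weakly null. -/
def WeaklyNull {X : Type*} [NormedAddCommGroup X] [NormedSpace ℝ X]
    (x : ℕ → X) : Prop :=
  ∀ f : X →L[ℝ] ℝ, Tendsto (fun n => f (x n)) atTop (nhds 0)

section Aux
variable {Z : Type*} [NormedAddCommGroup Z] [NormedSpace ℝ Z] (e : ℕ → Z) (coef : Z → ℕ → ℝ)

/-- Projections onto subsets of coordinates are norm-decreasing for a 1-unconditional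
system, on finite linear combinations. -/
lemma aux_proj
    (hunc : ∀ (a ε : ℕ → ℝ), IsSignSeq ε → ∀ s : Finset ℕ,
      ‖∑ n ∈ s, (ε n * a n) • e n‖ = ‖∑ n ∈ s, a n • e n‖)
    (b : ℕ → ℝ) (t A : Finset ℕ) :
    ‖∑ i ∈ t ∩ A, b i • e i‖ ≤ ‖∑ i ∈ t, b i • e i‖ := by
  classical
  set ε : ℕ → ℝ := fun i => if i ∈ A then 1 else -1 with hεdef
  have hsign : IsSignSeq ε := by
    intro i
    by_cases h : i ∈ A
    · left; simp [hεdef, h]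
    · right; simp [hεdef, h]
  have key := hunc b ε hsign t
  have hz : ∀ i ∈ t, i ∉ t ∩ A → b i • e i + (ε i * b i) • e i = 0 := by
    intro i hit hiA
    have hεi : ε i = -1 := if_neg fun h => hiA (Finset.mem_inter.mpr ⟨hit, h⟩)
    rw [hεi, neg_one_mul, neg_smul, add_neg_cancel]
  have h2 : ∑ i ∈ t, (b i • e i + (ε i * b i) • e i)
      = ∑ i ∈ t ∩ A, ((2:ℝ) • (b i • e i)) := by
    rw [← Finset.sum_subset Finset.inter_subset_left hz]
    refine Finset.sum_congr rfl fun i hi => ?_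
    have hεi : ε i = 1 := if_pos (Finset.mem_inter.mp hi).2
    rw [hεi, one_mul, two_smul]
  have h4 : (2:ℝ) * ‖∑ i ∈ t ∩ A, b i • e i‖ ≤ 2 * ‖∑ i ∈ t, b i • e i‖ := by
    calc (2:ℝ) * ‖∑ i ∈ t ∩ A, b i • e i‖
        = ‖(2:ℝ) • ∑ i ∈ t ∩ A, b i • e i‖ := by rw [norm_smul]; simp
      _ = ‖∑ i ∈ t ∩ A, ((2:ℝ) • (b i • e i))‖ := by rw [Finset.smul_sum]
      _ = ‖∑ i ∈ t, b i • e i + ∑ i ∈ t, (ε i * b i) • e i‖ := by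
          rw [← h2, Finset.sum_add_distrib]
      _ ≤ ‖∑ i ∈ t, b i • e i‖ + ‖∑ i ∈ t, (ε i * b i) • e i‖ := norm_add_le _ _
      _ = 2 * ‖∑ i ∈ t, b i • e i‖ := by rw [key]; ring
  linarith

variable (hexp : ∀ z : Z, Tendsto (fun N => ∑ i ∈ Finset.range N, coef z i • e i)
      atTop (nhds z))
    (hbiorth : ∀ (a : ℕ → ℝ) (N : ℕ) (i : ℕ), i < N →
      coef (∑ j ∈ Finset.range N, a j • e j) i = a i)
    (hunc : ∀ (a ε : ℕ → ℝ), IsSignSeq ε → ∀ s : Finset ℕ,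
      ‖∑ n ∈ s, (ε n * a n) • e n‖ = ‖∑ n ∈ s, a n • e n‖)

include hexp hunc

/-- Partial sums of the basis expansion are norm-bounded by the vector. -/
lemma aux_S_le (z : Z) (N : ℕ) :
    ‖∑ i ∈ Finset.range N, coef z i • e i‖ ≤ ‖z‖ := by
  have hlim : Tendsto (fun M => ‖∑ i ∈ Finset.range M, coef z i • e i‖) atTop (nhds ‖z‖) :=
    (hexp z).norm
  refine ge_of_tendsto hlim ?_
  filter_upwards [eventually_ge_atTop N] with M hM
  have h := aux_proj e hunc (coef z) (Finset.range M) (Finset.range N)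
  have hr : Finset.range M ∩ Finset.range N = Finset.range N := by
    ext i; simp only [Finset.mem_inter, Finset.mem_range]; omega
  rwa [hr] at h

lemma aux_coef_bound (z : Z) (i : ℕ) : ‖coef z i • e i‖ ≤ 2 * ‖z‖ := by
  have h1 := aux_S_le e coef hexp hunc z (i+1)
  have h2 := aux_S_le e coef hexp hunc z i
  have h3 : coef z i • e i = ∑ j ∈ Finset.range (i+1), coef z j • e j
      - ∑ j ∈ Finset.range i, coef z j • e j := by
    rw [Finset.sum_range_succ]; abel
  rw [h3]
  calc ‖_ - _‖ ≤ ‖_‖ + ‖_‖ := norm_sub_le _ _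
    _ ≤ 2 * ‖z‖ := by linarith

include hbiorth

/-- If the finite sums of a coefficient sequence tend to zero, each term vanishes. -/
lemma aux_unique (d : ℕ → ℝ)
    (hd : Tendsto (fun n => ∑ j ∈ Finset.range n, d j • e j) atTop (nhds 0))
    (i : ℕ) : d i • e i = 0 := by
  have hbd : ∀ᶠ n in atTop, ‖d i • e i‖ ≤ 2 * ‖∑ j ∈ Finset.range n, d j • e j‖ := by
    filter_upwards [eventually_gt_atTop i] with n hn
    have h := aux_coef_bound e coef hexp hunc (∑ j ∈ Finset.range n, d j • e j) i
    rwa [hbiorth d n i hn] at h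
  have hlim : Tendsto (fun n => 2 * ‖∑ j ∈ Finset.range n, d j • e j‖) atTop (nhds 0) := by
    have := hd.norm
    rw [norm_zero] at this
    simpa using this.const_mul 2
  have := ge_of_tendsto hlim hbd
  exact norm_le_zero_iff.mp this

lemma aux_coef_add (z w : Z) (i : ℕ) (he : e i ≠ 0) :
    coef (z + w) i = coef z i + coef w i := by
  set d : ℕ → ℝ := fun j => coef (z + w) j - coef z j - coef w j with hddef
  have hd : Tendsto (fun n => ∑ j ∈ Finset.range n, d j • e j) atTop (nhds 0) := by
    have h1 := ((hexp (z + w)).sub (hexp z)).sub (hexp w)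
    have h2 : z + w - z - w = 0 := by abel
    rw [h2] at h1
    convert h1 using 2 with n
    simp [hddef, sub_smul, Finset.sum_sub_distrib]
  have h0 := aux_unique e coef hexp hbiorth hunc d hd i
  rcases smul_eq_zero.mp h0 with h | h
  · have : d i = 0 := h
    simp only [hddef] at this
    linarith
  · exact absurd h he

lemma aux_coef_smul (r : ℝ) (z : Z) (i : ℕ) (he : e i ≠ 0) :
    coef (r • z) i = r * coef z i := by
  set d : ℕ → ℝ := fun j => coef (r • z) j - r * coef z j with hddef
  have hd : Tendsto (fun n => ∑ j ∈ Finset.range n, d j • e j) atTop (nhds 0) := by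
    have h1 := (hexp (r • z)).sub ((hexp z).const_smul r)
    rw [sub_self] at h1
    convert h1 using 2 with n
    simp [hddef, sub_smul, Finset.sum_sub_distrib, Finset.smul_sum, mul_smul]
  have h0 := aux_unique e coef hexp hbiorth hunc d hd i
  rcases smul_eq_zero.mp h0 with h | h
  · have : d i = 0 := h
    simp only [hddef] at this
    linarith
  · exact absurd h he

/-- The coordinate functional as a continuous linear map (when `e i ≠ 0`). -/
noncomputable def coefCLM (i : ℕ) (he : e i ≠ 0) : Z →L[ℝ] ℝ :=
  LinearMap.mkContinuous
    { toFun := fun z => coef z i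
      map_add' := fun z w => aux_coef_add e coef hexp hbiorth hunc z w i he
      map_smul' := fun r z => aux_coef_smul e coef hexp hbiorth hunc r z i he }
    (2 / ‖e i‖)
    (fun z => by
      show ‖coef z i‖ ≤ 2 / ‖e i‖ * ‖z‖
      have h := aux_coef_bound e coef hexp hunc z i
      rw [norm_smul] at h
      have hei : 0 < ‖e i‖ := norm_pos_iff.mpr he
      rw [div_mul_eq_mul_div, le_div_iff₀ hei]
      exact h)

lemma coefCLM_apply (i : ℕ) (he : e i ≠ 0) (z : Z) :
    coefCLM e coef hexp hbiorth hunc i he z = coef z i := rfl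

end Aux

/-- if `X` embeds isomorphically into a Banach space `Z` having a
1-unconditional Schauder basis `(eₙ)` (with expansions given by `coef`), then there
is a constant `K` such that every normalized weakly null sequence in `X` has a
`K`-unconditional subsequence. -/
theorem embed_unconditional_basis_implies_unconditional_subsequence
    (X Z : Type*) [NormedAddCommGroup X] [NormedSpace ℝ X] [CompleteSpace X]
    [NormedAddCommGroup Z] [NormedSpace ℝ Z] [CompleteSpace Z]
    (e : ℕ → Z) (coef : Z → ℕ → ℝ)
    (hexp : ∀ z : Z, Tendsto (fun N => ∑ i ∈ Finset.range N, coef z i • e i)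
      atTop (nhds z))
    (hbiorth : ∀ (a : ℕ → ℝ) (N : ℕ) (i : ℕ), i < N →
      coef (∑ j ∈ Finset.range N, a j • e j) i = a i)
    (hunc : ∀ (a ε : ℕ → ℝ), IsSignSeq ε → ∀ s : Finset ℕ,
      ‖∑ n ∈ s, (ε n * a n) • e n‖ = ‖∑ n ∈ s, a n • e n‖)
    (T : X →L[ℝ] Z) (c : ℝ) (hc : 0 < c) (hbelow : ∀ x : X, c * ‖x‖ ≤ ‖T x‖) :
    ∃ K : ℝ, 0 < K ∧ ∀ x : ℕ → X, (∀ n, ‖x n‖ = 1) → WeaklyNull x →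
      ∃ φ : ℕ → ℕ, StrictMono φ ∧ UncondWith K (x ∘ φ) := by
  classical
  refine ⟨2 * (‖T‖ + 1) / c, by positivity, ?_⟩
  intro x hx hwn
  set y : ℕ → Z := fun n => T (x n) with hydef
  -- each coordinate term of `y n` tends to zero
  have hterm : ∀ i : ℕ, Tendsto (fun n => coef (y n) i • e i) atTop (nhds 0) := by
    intro i
    by_cases he : e i = 0
    · simpa [he] using (tendsto_const_nhds : Tendsto (fun _ : ℕ => (0:Z)) atTop (nhds 0))
    · have hf := hwn ((coefCLM e coef hexp hbiorth hunc i he).comp T)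
      have h0 : Tendsto (fun n => coef (y n) i) atTop (nhds 0) := hf
      have := h0.smul_const (e i)
      simpa using this
  have hS0 : ∀ M : ℕ, Tendsto (fun n => ∑ i ∈ Finset.range M, coef (y n) i • e i)
      atTop (nhds 0) := by
    intro M
    have h := tendsto_finset_sum (Finset.range M)
      (fun i (_ : i ∈ Finset.range M) => hterm i)
    simpa using h
  set δ : ℕ → ℝ := fun k => c / 2 ^ (k + 5) with hδdef
  have hδpos : ∀ k, 0 < δ k := fun k => by positivity
  -- the gliding hump step
  have hstep : ∀ (k p M : ℕ), ∃ nM : ℕ × ℕ, p < nM.1 ∧ M < nM.2 ∧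
      ‖∑ i ∈ Finset.range M, coef (y nM.1) i • e i‖ ≤ δ k / 2 ∧
      ‖y nM.1 - ∑ i ∈ Finset.range nM.2, coef (y nM.1) i • e i‖ ≤ δ k / 2 := by
    intro k p M
    have h1 : ∀ᶠ n in atTop, ‖∑ i ∈ Finset.range M, coef (y n) i • e i‖ ≤ δ k / 2 := by
      have := NormedAddCommGroup.tendsto_nhds_zero.mp (hS0 M) (δ k / 2) (by positivity)
      filter_upwards [this] with n hn using le_of_lt hn
    obtain ⟨n, hn1, hn2⟩ := (h1.and (eventually_gt_atTop p)).exists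
    have h2 : ∀ᶠ M' in atTop,
        ‖y n - ∑ i ∈ Finset.range M', coef (y n) i • e i‖ ≤ δ k / 2 := by
      have ht : Tendsto (fun M' => y n - ∑ i ∈ Finset.range M', coef (y n) i • e i)
          atTop (nhds 0) := by
        have := (tendsto_const_nhds (x := y n)).sub (hexp (y n))
        simpa using this
      have := NormedAddCommGroup.tendsto_nhds_zero.mp ht (δ k / 2) (by positivity)
      filter_upwards [this] with M' hM' using le_of_lt hM'
    obtain ⟨M', hM'1, hM'2⟩ := (h2.and (eventually_gt_atTop M)).exists
    exact ⟨(n, M'), hn2, hM'2, hn1, hM'1⟩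
  choose step hstep1 hstep2 hstep3 hstep4 using hstep
  set g : ℕ → ℕ × ℕ :=
    fun k => Nat.rec (step 0 0 0) (fun k ih => step (k+1) ih.1 ih.2) k with hgdef
  set φ : ℕ → ℕ := fun k => (g k).1 with hφdef
  set N : ℕ → ℕ := fun k => Nat.rec 0 (fun k _ => (g k).2) k with hNdef
  have hgsucc : ∀ k, g (k+1) = step (k+1) (g k).1 (g k).2 := fun k => rfl
  have hN0 : N 0 = 0 := rfl
  have hNsucc : ∀ k, N (k+1) = (g k).2 := fun k => rfl
  have hφmono : StrictMono φ := by
    apply strictMono_nat_of_lt_succ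
    intro k
    have := hstep1 (k+1) (g k).1 (g k).2
    simpa [hφdef, hgsucc k] using this
  have hNmono : StrictMono N := by
    apply strictMono_nat_of_lt_succ
    intro k
    cases k with
    | zero => exact hstep2 0 0 0
    | succ m =>
        have := hstep2 (m+1) (g m).1 (g m).2
        simpa [hNsucc, hgsucc m] using this
  have hsmall : ∀ k, ‖∑ i ∈ Finset.range (N k), coef (y (φ k)) i • e i‖ ≤ δ k / 2 := by
    intro k
    cases k with
    | zero => simpa [hN0] using le_of_lt (half_pos (hδpos 0))
    | succ m =>
        have := hstep3 (m+1) (g m).1 (g m).2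
        simpa [hφdef, hNsucc, hgsucc m] using this
  have htail : ∀ k,
      ‖y (φ k) - ∑ i ∈ Finset.range (N (k+1)), coef (y (φ k)) i • e i‖ ≤ δ k / 2 := by
    intro k
    cases k with
    | zero => exact hstep4 0 0 0
    | succ m =>
        have := hstep4 (m+1) (g m).1 (g m).2
        simpa [hφdef, hNsucc, hgsucc m] using this
  -- the humps
  set u : ℕ → Z :=
    fun k => ∑ i ∈ Finset.Ico (N k) (N (k+1)), coef (y (φ k)) i • e i with hudef
  have hu_eq : ∀ k, u k = ∑ i ∈ Finset.range (N (k+1)), coef (y (φ k)) i • e i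
      - ∑ i ∈ Finset.range (N k), coef (y (φ k)) i • e i := by
    intro k
    rw [hudef]
    exact Finset.sum_Ico_eq_sub _ (le_of_lt (hNmono (Nat.lt_succ_self k)))
  have huy : ∀ k, ‖y (φ k) - u k‖ ≤ δ k := by
    intro k
    have h1 := htail k
    have h2 := hsmall k
    have heq : y (φ k) - u k
        = (y (φ k) - ∑ i ∈ Finset.range (N (k+1)), coef (y (φ k)) i • e i)
          + ∑ i ∈ Finset.range (N k), coef (y (φ k)) i • e i := by
      rw [hu_eq k]; abel
    rw [heq]
    calc ‖_ + _‖ ≤ ‖_‖ + ‖_‖ := norm_add_le _ _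
      _ ≤ δ k / 2 + δ k / 2 := add_le_add h1 h2
      _ = δ k := by ring
  have hyc : ∀ k, c ≤ ‖y (φ k)‖ := by
    intro k
    have := hbelow (x (φ k))
    rwa [hx (φ k), mul_one] at this
  have hδ32 : ∀ k, δ k ≤ c / 32 := by
    intro k
    rw [hδdef]
    have h1 : (2:ℝ) ^ 5 ≤ 2 ^ (k + 5) :=
      pow_le_pow_right₀ (by norm_num) (by omega)
    have h2 : (0:ℝ) < 2 ^ (k + 5) := by positivity
    rw [div_le_div_iff₀ h2 (by norm_num : (0:ℝ) < 32)]
    nlinarith [hc.le]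
  have huc : ∀ k, c / 2 ≤ ‖u k‖ := by
    intro k
    have h1 := huy k
    have h2 := hyc k
    have h3 : ‖y (φ k)‖ - ‖u k‖ ≤ ‖y (φ k) - u k‖ := norm_sub_norm_le _ _
    have h4 := hδ32 k
    linarith
  -- block index function
  set κ : ℕ → ℕ := fun i => Nat.findGreatest (fun k => N k ≤ i) i with hκdef
  have hNge : ∀ k, k ≤ N k := fun k => hNmono.le_apply
  have hκ_eq : ∀ k i, N k ≤ i → i < N (k+1) → κ i = k := by
    intro k i h1 h2
    rw [hκdef]
    rw [Nat.findGreatest_eq_iff]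
    refine ⟨le_trans (hNge k) h1, fun _ => h1, ?_⟩
    intro m hm hmi hNm
    have : N (k+1) ≤ N m := hNmono.monotone hm
    omega
  have hdisj : ∀ (s : Finset ℕ), (↑s : Set ℕ).PairwiseDisjoint
      (fun k => Finset.Ico (N k) (N (k+1))) := by
    intro s k _ k' _ hkk'
    apply Finset.disjoint_left.mpr
    intro i hi hi'
    have h1 := Finset.mem_Ico.mp hi
    have h2 := Finset.mem_Ico.mp hi'
    exact hkk' ((hκ_eq k i h1.1 h1.2).symm.trans (hκ_eq k' i h2.1 h2.2))
  -- block sum identity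
  have hblock : ∀ (b : ℕ → ℝ) (s : Finset ℕ),
      ∑ k ∈ s, b k • u k
        = ∑ i ∈ s.biUnion (fun k => Finset.Ico (N k) (N (k+1))),
            (b (κ i) * coef (y (φ (κ i))) i) • e i := by
    intro b s
    rw [Finset.sum_biUnion (hdisj s)]
    refine Finset.sum_congr rfl fun k hk => ?_
    rw [hudef, Finset.smul_sum]
    refine Finset.sum_congr rfl fun i hi => ?_
    have hik := Finset.mem_Ico.mp hi
    rw [hκ_eq k i hik.1 hik.2, smul_smul]
  -- final unconditionality proof
  refine ⟨φ, hφmono, ?_⟩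
  intro a ε hε s
  set t : Finset ℕ := s.biUnion (fun k => Finset.Ico (N k) (N (k+1))) with htdef
  set b : ℕ → ℝ := fun i => a (κ i) * coef (y (φ (κ i))) i with hbdef
  set v : Z := ∑ k ∈ s, a k • u k with hvdef
  have key1 : v = ∑ i ∈ t, b i • e i := hblock a s
  have hεκ : IsSignSeq (fun i => ε (κ i)) := fun i => hε (κ i)
  have key2 : ∑ k ∈ s, (ε k * a k) • u k = ∑ i ∈ t, ((ε (κ i)) * b i) • e i := by
    rw [hblock (fun k => ε k * a k) s]
    exact Finset.sum_congr rfl fun i _ => by rw [mul_assoc]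
  have hv'v : ‖∑ k ∈ s, (ε k * a k) • u k‖ = ‖v‖ := by
    rw [key2, key1]
    exact hunc b (fun i => ε (κ i)) hεκ t
  -- block projections
  have hproj : ∀ k ∈ s, ‖a k • u k‖ ≤ ‖v‖ := by
    intro k hk
    have h1 : a k • u k = ∑ i ∈ t ∩ Finset.Ico (N k) (N (k+1)), b i • e i := by
      have h2 := hblock a {k}
      rw [Finset.sum_singleton, Finset.singleton_biUnion] at h2
      rw [h2]
      congr 1
      exact (Finset.inter_eq_right.mpr (Finset.subset_biUnion_of_mem (fun k => Finset.Ico (N k) (N (k+1))) hk)).symm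
    rw [h1, key1]
    exact aux_proj e hunc b t _
  have habs : ∀ k ∈ s, |a k| ≤ 2 / c * ‖v‖ := by
    intro k hk
    have h1 := hproj k hk
    rw [norm_smul, Real.norm_eq_abs] at h1
    have h2 := huc k
    have h3 : |a k| * (c / 2) ≤ |a k| * ‖u k‖ :=
      mul_le_mul_of_nonneg_left h2 (abs_nonneg _)
    rw [div_mul_eq_mul_div, le_div_iff₀ hc]
    nlinarith [abs_nonneg (a k)]
  have hsumδ : ∑ k ∈ s, δ k ≤ c / 16 := by
    have hpt : ∀ k, δ k = (c / 32) * (1/2 : ℝ) ^ k := by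
      intro k
      simp only [hδdef]
      rw [pow_add, div_pow, one_pow, div_mul_div_comm]
      norm_num
      ring_nf
    calc ∑ k ∈ s, δ k = ∑ k ∈ s, (c / 32) * (1/2 : ℝ) ^ k :=
          Finset.sum_congr rfl fun k _ => hpt k
      _ = (c / 32) * ∑ k ∈ s, (1/2 : ℝ) ^ k := by rw [Finset.mul_sum]
      _ ≤ (c / 32) * 2 := by
          apply mul_le_mul_of_nonneg_left _ (by positivity)
          calc ∑ k ∈ s, (1/2 : ℝ) ^ k ≤ ∑' k : ℕ, (1/2 : ℝ) ^ k := by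
                apply Summable.sum_le_tsum s (fun k _ => by positivity)
                exact summable_geometric_of_lt_one (by norm_num) (by norm_num)
            _ = 2 := tsum_geometric_two
      _ = c / 16 := by ring
  have hsum_aδ : ∑ k ∈ s, |a k| * δ k ≤ ‖v‖ / 8 := by
    calc ∑ k ∈ s, |a k| * δ k ≤ ∑ k ∈ s, (2 / c * ‖v‖) * δ k := by
          apply Finset.sum_le_sum
          intro k hk
          exact mul_le_mul_of_nonneg_right (habs k hk) (hδpos k).le
      _ = (2 / c * ‖v‖) * ∑ k ∈ s, δ k := by rw [Finset.mul_sum]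
      _ ≤ (2 / c * ‖v‖) * (c / 16) := by
          apply mul_le_mul_of_nonneg_left hsumδ
          positivity
      _ = ‖v‖ / 8 := by field_simp; ring
  set w : Z := ∑ k ∈ s, a k • y (φ k) with hwdef
  set w' : Z := ∑ k ∈ s, (ε k * a k) • y (φ k) with hw'def
  have hvw : ‖v - w‖ ≤ ∑ k ∈ s, |a k| * δ k := by
    have heq : v - w = ∑ k ∈ s, a k • (u k - y (φ k)) := by
      rw [hvdef, hwdef, ← Finset.sum_sub_distrib]
      exact Finset.sum_congr rfl fun k _ => by rw [smul_sub]
    rw [heq]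
    calc ‖∑ k ∈ s, a k • (u k - y (φ k))‖ ≤ ∑ k ∈ s, ‖a k • (u k - y (φ k))‖ :=
          norm_sum_le _ _
      _ ≤ ∑ k ∈ s, |a k| * δ k := by
          apply Finset.sum_le_sum
          intro k _
          rw [norm_smul, Real.norm_eq_abs]
          apply mul_le_mul_of_nonneg_left _ (abs_nonneg _)
          rw [← norm_neg]
          simpa using huy k
  have hv'w' : ‖(∑ k ∈ s, (ε k * a k) • u k) - w'‖ ≤ ∑ k ∈ s, |a k| * δ k := by
    have heq : (∑ k ∈ s, (ε k * a k) • u k) - w'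
        = ∑ k ∈ s, (ε k * a k) • (u k - y (φ k)) := by
      rw [hw'def, ← Finset.sum_sub_distrib]
      exact Finset.sum_congr rfl fun k _ => by rw [smul_sub]
    rw [heq]
    calc ‖_‖ ≤ ∑ k ∈ s, ‖(ε k * a k) • (u k - y (φ k))‖ := norm_sum_le _ _
      _ ≤ ∑ k ∈ s, |a k| * δ k := by
          apply Finset.sum_le_sum
          intro k _
          rw [norm_smul, Real.norm_eq_abs, abs_mul]
          have hεk : |ε k| = 1 := by rcases hε k with h | h <;> simp [h]
          rw [hεk, one_mul]
          apply mul_le_mul_of_nonneg_left _ (abs_nonneg _)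
          rw [← norm_neg]
          simpa using huy k
  -- perturbation estimates
  have hest1 : ‖v‖ - ‖w‖ ≤ ‖v - w‖ := norm_sub_norm_le _ _
  have hest2 : ‖w'‖ - ‖∑ k ∈ s, (ε k * a k) • u k‖
      ≤ ‖(∑ k ∈ s, (ε k * a k) • u k) - w'‖ := by
    rw [norm_sub_rev]
    exact norm_sub_norm_le _ _
  have hw2 : ‖w'‖ ≤ 2 * ‖w‖ := by
    have h0 : (0:ℝ) ≤ ‖w‖ := norm_nonneg _
    rw [hv'v] at hest2
    linarith
  -- pull back through T
  have hTp : T (∑ n ∈ s, (ε n * a n) • (x ∘ φ) n) = w' := by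
    rw [map_sum]
    exact Finset.sum_congr rfl fun n _ => by
      rw [ContinuousLinearMap.map_smul]; rfl
  have hTq : T (∑ n ∈ s, a n • (x ∘ φ) n) = w := by
    rw [map_sum]
    exact Finset.sum_congr rfl fun n _ => by
      rw [ContinuousLinearMap.map_smul]; rfl
  have hp := hbelow (∑ n ∈ s, (ε n * a n) • (x ∘ φ) n)
  rw [hTp] at hp
  have hq : ‖w‖ ≤ ‖T‖ * ‖∑ n ∈ s, a n • (x ∘ φ) n‖ := by
    rw [← hTq]
    exact T.le_opNorm _
  rw [div_mul_eq_mul_div, le_div_iff₀ hc]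
  have hT0 : (0:ℝ) ≤ ‖T‖ := norm_nonneg _
  have hq0 : (0:ℝ) ≤ ‖∑ n ∈ s, a n • (x ∘ φ) n‖ := norm_nonneg _
  nlinarith
end

section
/- Let X be a Banach space with a shrinking Schauder basis and let Y be a closed subspace of X. Then for every normalized weakly null tree in Y indexed by finite subsets of ℕ and for any sequence of positive reals (δᵢ) decreasing to 0, one can choose a branch (x_{A₁} ≤ x_{A₂} ≤ ...) along which the basis coordinates of x_{Aᵢ} below some index nᵢ have norm at most δᵢ, where nᵢ → ∞. -/
open Filter

/-- Let `X` be a Banach space with a shrinking Schauder basis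
`(eₙ)` (coordinate functionals `f`), `Y` a closed subspace, and `(T_A)` a
normalized weakly null tree in `Y` indexed by finite subsets of `ℕ`. Then for any
positive `(δᵢ)` decreasing to `0` one can choose a branch, given by a strictly
increasing `m : ℕ → ℕ` with `Aᵢ = {m 0, …, m i}`, and indices `nᵢ → ∞`, so that the
initial basis coordinates of `T (Aᵢ)` below `nᵢ` have norm at most `δᵢ`. -/
theorem shrinking_basis_tree_branch_small_coordinates
    (X : Type*) [NormedAddCommGroup X] [NormedSpace ℝ X] [CompleteSpace X]
    (e : ℕ → X) (f : ℕ → (X →L[ℝ] ℝ))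
    (hexp : ∀ z : X, Tendsto (fun N => ∑ i ∈ Finset.range N, f i z • e i)
      atTop (nhds z))
    (hbiorth : ∀ i j : ℕ, f i (e j) = if i = j then 1 else 0)
    (hshrinking :
      (Submodule.span ℝ (Set.range f)).topologicalClosure = ⊤)
    (Y : Subspace ℝ X) (hY : IsClosed (Y : Set X))
    (T : Finset ℕ → X)
    (hmem : ∀ A, T A ∈ Y) (hnorm : ∀ A, ‖T A‖ = 1)
    (hwnull : ∀ (A : Finset ℕ) (g : X →L[ℝ] ℝ),
      Tendsto (fun n => g (T (insert n A))) atTop (nhds 0))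
    (δ : ℕ → ℝ) (hδpos : ∀ i, 0 < δ i) (hδanti : Antitone δ)
    (hδ0 : Tendsto δ atTop (nhds 0)) :
    ∃ m : ℕ → ℕ, StrictMono m ∧ ∃ nn : ℕ → ℕ, StrictMono nn ∧
      ∀ i : ℕ,
        ‖∑ j ∈ Finset.range (nn i),
          f j (T ((Finset.range (i + 1)).image m)) • e j‖ ≤ δ i := by
  -- Key: for fixed A and fixed number of coordinates, the partial sum is eventually small.
  have key : ∀ (A : Finset ℕ) (k : ℕ) (ε : ℝ), 0 < ε →
      ∃ N : ℕ, ∀ n ≥ N, ‖∑ j ∈ Finset.range k, f j (T (insert n A)) • e j‖ ≤ ε := by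
    intro A k ε hε
    have h0 : Tendsto (fun n => ∑ j ∈ Finset.range k, f j (T (insert n A)) • e j)
        atTop (nhds 0) := by
      have h := tendsto_finset_sum (Finset.range k)
        (fun j _ => ((hwnull A (f j)).smul_const (e j)))
      simpa using h
    have h1 : Tendsto (fun n => ‖∑ j ∈ Finset.range k, f j (T (insert n A)) • e j‖)
        atTop (nhds 0) := by simpa using h0.norm
    have h2 := h1.eventually_le_const hε
    rcases (eventually_atTop.mp h2) with ⟨N, hN⟩
    exact ⟨N, hN⟩
  -- selection step
  have step : ∀ (i b : ℕ) (A : Finset ℕ), ∃ n, b < n ∧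
      ‖∑ j ∈ Finset.range (i + 1), f j (T (insert n A)) • e j‖ ≤ δ i := by
    intro i b A
    obtain ⟨N, hN⟩ := key A (i + 1) (δ i) (hδpos i)
    refine ⟨max (b + 1) N, ?_, hN _ (le_max_right _ _)⟩
    exact lt_of_lt_of_le (Nat.lt_succ_self b) (le_max_left _ _)
  choose pick hpick1 hpick2 using step
  -- recursive construction of the branch
  set seq : ℕ → ℕ × Finset ℕ := fun i =>
    Nat.rec (pick 0 0 ∅, {pick 0 0 ∅})
      (fun i p => (pick (i + 1) p.1 p.2, insert (pick (i + 1) p.1 p.2) p.2)) i with hseq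
  set m : ℕ → ℕ := fun i => (seq i).1 with hm
  have hmono : StrictMono m := by
    apply strictMono_nat_of_lt_succ
    intro i
    exact hpick1 (i + 1) ((seq i).1) ((seq i).2)
  have hA : ∀ i, (seq i).2 = (Finset.range (i + 1)).image m := by
    intro i
    induction i with
    | zero => simp [hseq, hm]
    | succ i ih =>
      have h1 : (seq (i + 1)).2 = insert (m (i + 1)) ((seq i).2) := rfl
      rw [h1, ih, Finset.range_add_one (n := i + 1), Finset.image_insert]
  refine ⟨m, hmono, fun i => i + 1, strictMono_id.add_const 1, fun i => ?_⟩
  cases i with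
  | zero =>
    have := hpick2 0 0 ∅
    have hA0 : (Finset.range 1).image m = insert (pick 0 0 ∅) ∅ := by
      simp [hm, hseq]
    rw [hA0]
    exact this
  | succ i =>
    have := hpick2 (i + 1) ((seq i).1) ((seq i).2)
    have hA1 : (Finset.range (i + 2)).image m
        = insert (pick (i + 1) ((seq i).1) ((seq i).2)) ((seq i).2) := by
      rw [← hA (i + 1)]
    rw [hA1]
    exact this
end
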